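/- arXiv:2409.03383 — 2 statements merged into one kernel-verified Lean document; each statement's English description precedes it below -/
import Mathlib

section
/- Fix k, r₀ > 0 and ξ ∈ (0, 1), and for each large integer m define v_m(r, θ) = β_m J_m(k r) e^{imθ} on the disk B_{r₀} ⊂ ℝ², where β_m > 0 is arbitrary. Then the L²-mass ratio ∥v_m∥²_{L²(B_{ξ r₀})} / ∥v_m∥²_{L²(B_{r₀})} ≤ C(k, r₀) · ξ^{2m+2} · (1 + 2m) for all sufficiently large m; in particular the ratio tends to 0 as m → ∞, i.e., v_m is surface-localized. -/
open Filter MeasureTheory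

/-- The Bessel function of the first kind of integer order `m`,
defined by its power series. -/
noncomputable def besselJ (m : ℕ) (x : ℝ) : ℝ :=
  ∑' n : ℕ, ((-1 : ℝ) ^ n / (n.factorial * (n + m).factorial)) * (x / 2) ^ (2 * n + m)

/-- The eigenfunction `v_m(r,θ) = β_m J_m(k r) e^{imθ}`, viewed as a function
on the plane `ℝ² ≅ ℂ` via polar coordinates. -/
noncomputable def vEig (β : ℕ → ℝ) (k : ℝ) (m : ℕ) (z : ℂ) : ℂ :=
  (β m : ℂ) * (besselJ m (k * ‖z‖) : ℂ) *
    Complex.exp (Complex.I * (m : ℂ) * (z.arg : ℂ))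

/-!
Since `n! (n+m)! ≥ m! (m+1)^n`, for `3 (x/2)² ≤ m + 1` the terms of the power series of
`J_m(x)` after the leading one are dominated by a geometric series of ratio `1/3`, so `J_m(x)` lies within a factor `[1/2, 3/2]`
of its leading term `(x/2)^m / m!`. Hence on `B_{r₀}`, once `m` is large, `|v_m|²` is
comparable, with constants `1/4` and `9/4`, to `β_m² ((k|z|/2)^m / m!)²`. That function is
homogeneous of degree `2m` on `ℝ²`, so its integral over `B_{ξ r₀}` is `ξ^{2m+2}` times its
integral over `B_{r₀}`, and the mass ratio is at most `9 ξ^{2m+2}`.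
-/

open Metric Module
open scoped Nat

noncomputable def besselTerm (m : ℕ) (x : ℝ) (n : ℕ) : ℝ :=
  ((-1 : ℝ) ^ n / (n ! * (n + m)!)) * (x / 2) ^ (2 * n + m)

theorem besselTerm_zero (m : ℕ) (x : ℝ) : besselTerm m x 0 = (x / 2) ^ m / m ! := by
  simp [besselTerm, div_eq_inv_mul]

theorem abs_besselTerm (m : ℕ) (x : ℝ) (n : ℕ) :
    |besselTerm m x n| = |x / 2| ^ (2 * n + m) / (n ! * (n + m)!) := by
  rw [besselTerm, abs_mul, abs_div, abs_pow, abs_pow, abs_neg, abs_one, one_pow,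
    abs_of_pos (by positivity : (0 : ℝ) < n ! * (n + m)!)]
  ring

theorem abs_besselTerm_le_pow_div_factorial (m : ℕ) (x : ℝ) (n : ℕ) :
    |besselTerm m x n| ≤ |x / 2| ^ m * (|x / 2| ^ 2) ^ n / n ! := by
  rw [abs_besselTerm, ← pow_mul, pow_add, mul_comm]
  gcongr
  exact le_mul_of_one_le_right (by positivity) (mod_cast (n + m).factorial_pos)

theorem abs_besselTerm_le_geometric (m : ℕ) (x : ℝ) (n : ℕ) :
    |besselTerm m x n| ≤ |x / 2| ^ m / m ! * ((x / 2) ^ 2 / (m + 1)) ^ n := by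
  have hfac : (m ! : ℝ) * (m + 1) ^ n ≤ n ! * (n + m)! := by
    calc (m ! : ℝ) * (m + 1) ^ n ≤ (m + n)! := mod_cast Nat.factorial_mul_pow_le_factorial
      _ = 1 * (n + m)! := by rw [one_mul, add_comm]
      _ ≤ n ! * (n + m)! := by gcongr; exact mod_cast n.factorial_pos
  calc |besselTerm m x n| = |x / 2| ^ m * (|x / 2| ^ 2) ^ n / (n ! * (n + m)!) := by
        rw [abs_besselTerm, ← pow_mul, pow_add, mul_comm]
    _ ≤ |x / 2| ^ m * (|x / 2| ^ 2) ^ n / (m ! * (m + 1) ^ n) := by gcongr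
    _ = |x / 2| ^ m / m ! * ((x / 2) ^ 2 / (m + 1)) ^ n := by
        rw [sq_abs, div_pow ((x / 2) ^ 2)]; field_simp

theorem summable_besselTerm (m : ℕ) (x : ℝ) : Summable (besselTerm m x) :=
  .of_norm_bounded ((Real.summable_pow_div_factorial _).mul_left (|x / 2| ^ m))
    fun n => (abs_besselTerm_le_pow_div_factorial m x n).trans_eq (mul_div_assoc _ _ _)

theorem besselJ_eq_tsum (m : ℕ) (x : ℝ) : besselJ m x = ∑' n, besselTerm m x n := rfl

theorem continuous_besselJ (m : ℕ) : Continuous (besselJ m) := by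
  refine continuous_iff_continuousAt.2 fun x => ?_
  set R := |x| + 1
  have hcont : ContinuousOn (besselJ m) (Set.Ioo (-R) R) := by
    refine continuousOn_tsum (fun n => by fun_prop)
      (u := fun n => |R / 2| ^ m * (|R / 2| ^ 2) ^ n / n !)
      (((Real.summable_pow_div_factorial _).mul_left _).congr fun n => (mul_div_assoc _ _ _).symm)
      fun n y hy => (abs_besselTerm_le_pow_div_factorial m y n).trans ?_
    have : |y / 2| ≤ |R / 2| := abs_le_abs (by linarith [hy.2]) (by linarith [hy.1])
    gcongr
  exact hcont.continuousAt
    (Ioo_mem_nhds (by linarith [neg_abs_le x]) (by linarith [le_abs_self x]))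

theorem abs_besselJ_sub_le {m : ℕ} {x : ℝ} (hq : (x / 2) ^ 2 / (m + 1) < 1) :
    |besselJ m x - (x / 2) ^ m / m !| ≤
      |x / 2| ^ m / m ! * ((x / 2) ^ 2 / (m + 1) / (1 - (x / 2) ^ 2 / (m + 1))) := by
  set q := (x / 2) ^ 2 / (m + 1)
  have hq0 : 0 ≤ q := by positivity
  have hgeom : Summable fun n => |x / 2| ^ m / m ! * q ^ (n + 1) :=
    ((summable_geometric_of_lt_one hq0 hq).mul_left (|x / 2| ^ m / m ! * q)).congr
      fun n => by ring
  have htail : Summable fun n => besselTerm m x (n + 1) :=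
    (summable_nat_add_iff 1).2 (summable_besselTerm m x)
  rw [besselJ_eq_tsum, (summable_besselTerm m x).tsum_eq_zero_add, besselTerm_zero,
    add_sub_cancel_left]
  calc |∑' n, besselTerm m x (n + 1)|
      ≤ ∑' n, |x / 2| ^ m / m ! * q ^ (n + 1) :=
        (norm_tsum_le_tsum_norm htail.norm).trans
          (htail.norm.tsum_le_tsum (fun n => abs_besselTerm_le_geometric m x (n + 1)) hgeom)
    _ = |x / 2| ^ m / m ! * (q / (1 - q)) := by
        simp_rw [pow_succ, ← mul_assoc]
        rw [tsum_mul_right, tsum_mul_left, tsum_geometric_of_lt_one hq0 hq]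
        ring

theorem besselJ_sq_bounds {m : ℕ} {x : ℝ} (hx : 3 * (x / 2) ^ 2 ≤ m + 1) :
    ((x / 2) ^ m / m !) ^ 2 / 4 ≤ besselJ m x ^ 2 ∧
      besselJ m x ^ 2 ≤ 9 / 4 * ((x / 2) ^ m / m !) ^ 2 := by
  set a := (x / 2) ^ m / (m !)
  have hq : (x / 2) ^ 2 / (m + 1) ≤ 1 / 3 := by
    rw [div_le_iff₀ (by positivity)]; linarith
  have hratio : (x / 2) ^ 2 / (m + 1) / (1 - (x / 2) ^ 2 / (m + 1)) ≤ 1 / 2 := by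
    rw [div_le_iff₀ (by linarith)]; linarith
  have hdist : |besselJ m x - a| ≤ |a| / 2 := by
    have ha : |a| = |x / 2| ^ m / m ! := by simp [a, abs_div]
    calc _ ≤ _ := abs_besselJ_sub_le (by linarith)
      _ ≤ |a| * (1 / 2) := by rw [ha]; gcongr
      _ = |a| / 2 := by ring
  have hlow : |a| / 2 ≤ |besselJ m x| := by
    linarith [abs_sub_abs_le_abs_sub a (besselJ m x), abs_sub_comm a (besselJ m x)]
  have hup : |besselJ m x| ≤ 3 / 2 * |a| := by
    linarith [abs_sub_abs_le_abs_sub (besselJ m x) a]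
  constructor
  · rw [← sq_abs a, ← sq_abs (besselJ m x)]; nlinarith [abs_nonneg a]
  · rw [← sq_abs a, ← sq_abs (besselJ m x)]; nlinarith [abs_nonneg (besselJ m x)]

section HomogeneousWeight

variable {E : Type*} [NormedAddCommGroup E] [NormedSpace ℝ E] [FiniteDimensional ℝ E]
  [MeasurableSpace E] [BorelSpace E] (μ : Measure E) [μ.IsAddHaarMeasure]
  {w : E → ℝ} {p : ℕ} {ξ : ℝ}

theorem setIntegral_ball_mul_radius_of_homogeneous (hξ : 0 < ξ)
    (hw : ∀ z, w (ξ • z) = ξ ^ p * w z) (r : ℝ) :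
    ∫ z in ball (0 : E) (ξ * r), w z ∂μ =
      ξ ^ (p + finrank ℝ E) * ∫ z in ball (0 : E) r, w z ∂μ := by
  have hscale := Measure.setIntegral_comp_smul_of_pos μ w (ball (0 : E) r) hξ
  rw [_root_.smul_ball hξ.ne', smul_zero, Real.norm_of_nonneg hξ.le, smul_eq_mul] at hscale
  simp_rw [hw, integral_const_mul] at hscale
  rw [eq_inv_mul_iff_mul_eq₀ (by positivity)] at hscale
  rw [← hscale, pow_add]
  ring

theorem setIntegral_ball_div_le_of_homogeneous_bounds {f : E → ℝ} {a b r : ℝ}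
    (hf : Continuous f) (hw : Continuous w) (hf0 : ∀ z, 0 ≤ f z) (ha : 0 < a) (hb : 0 ≤ b)
    (hξ : 0 < ξ) (hw_smul : ∀ z, w (ξ • z) = ξ ^ p * w z)
    (hlow : ∀ z ∈ ball (0 : E) r, a * w z ≤ f z)
    (hup : ∀ z ∈ ball (0 : E) (ξ * r), f z ≤ b * w z) :
    (∫ z in ball (0 : E) (ξ * r), f z ∂μ) / (∫ z in ball (0 : E) r, f z ∂μ) ≤
      b / a * ξ ^ (p + finrank ℝ E) := by
  have hint : ∀ {g : E → ℝ}, Continuous g → ∀ ρ, IntegrableOn g (ball (0 : E) ρ) μ :=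
    fun hg ρ =>
      (hg.continuousOn.integrableOn_compact (isCompact_closedBall 0 ρ)).mono_set
        ball_subset_closedBall
  have hnum : ∫ z in ball (0 : E) (ξ * r), f z ∂μ ≤
      b * ∫ z in ball (0 : E) (ξ * r), w z ∂μ := by
    rw [← integral_const_mul]
    exact setIntegral_mono_on (hint hf _) (hint (continuous_const.mul hw) _) measurableSet_ball hup
  have hden : a * ∫ z in ball (0 : E) r, w z ∂μ ≤ ∫ z in ball (0 : E) r, f z ∂μ := by
    rw [← integral_const_mul]
    exact setIntegral_mono_on (hint (continuous_const.mul hw) _) (hint hf _) measurableSet_ball hlow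
  refine div_le_of_le_mul₀ (setIntegral_nonneg measurableSet_ball fun z _ => hf0 z)
    (by positivity) ?_
  calc ∫ z in ball (0 : E) (ξ * r), f z ∂μ
      ≤ b * (ξ ^ (p + finrank ℝ E) * ∫ z in ball (0 : E) r, w z ∂μ) := by
        rwa [← setIntegral_ball_mul_radius_of_homogeneous μ hξ hw_smul]
    _ = b / a * ξ ^ (p + finrank ℝ E) * (a * ∫ z in ball (0 : E) r, w z ∂μ) := by
        field_simp
    _ ≤ b / a * ξ ^ (p + finrank ℝ E) * ∫ z in ball (0 : E) r, f z ∂μ := by gcongr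

end HomogeneousWeight

theorem norm_vEig_sq (β : ℕ → ℝ) (k : ℝ) (m : ℕ) (z : ℂ) :
    ‖vEig β k m z‖ ^ 2 = (β m * besselJ m (k * ‖z‖)) ^ 2 := by
  simp [vEig, Complex.norm_exp, mul_pow]

theorem continuous_norm_vEig_sq (β : ℕ → ℝ) (k : ℝ) (m : ℕ) :
    Continuous fun z => ‖vEig β k m z‖ ^ 2 := by
  simp_rw [norm_vEig_sq]
  have := continuous_besselJ m
  fun_prop

noncomputable def vEigLeading (β : ℕ → ℝ) (k : ℝ) (m : ℕ) (z : ℂ) : ℝ :=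
  β m * ((k * ‖z‖ / 2) ^ m / m !)

theorem vEigLeading_smul_sq (β : ℕ → ℝ) (k : ℝ) (m : ℕ) {ξ : ℝ} (hξ : 0 ≤ ξ)
    (z : ℂ) :
    vEigLeading β k m (ξ • z) ^ 2 = ξ ^ (2 * m) * vEigLeading β k m z ^ 2 := by
  rw [vEigLeading, vEigLeading, norm_smul, Real.norm_of_nonneg hξ, pow_mul]
  ring

theorem vEigLeading_sq_le_norm_vEig_sq {β : ℕ → ℝ} {k : ℝ} {m : ℕ} {z : ℂ}
    (h : 3 * (k * ‖z‖ / 2) ^ 2 ≤ m + 1) :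
    1 / 4 * vEigLeading β k m z ^ 2 ≤ ‖vEig β k m z‖ ^ 2 ∧
      ‖vEig β k m z‖ ^ 2 ≤ 9 / 4 * vEigLeading β k m z ^ 2 := by
  obtain ⟨hlow, hup⟩ := besselJ_sq_bounds h
  rw [norm_vEig_sq, vEigLeading, mul_pow, mul_pow]
  constructor <;> nlinarith [sq_nonneg (β m)]

theorem vEig_mass_ratio_le (β : ℕ → ℝ) {k r₀ ξ : ℝ} {m : ℕ}
    (hξ : ξ ∈ Set.Ioo (0 : ℝ) 1) (hm : 3 * (k * r₀ / 2) ^ 2 ≤ m + 1) :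
    (∫ z in ball (0 : ℂ) (ξ * r₀), ‖vEig β k m z‖ ^ 2) /
      (∫ z in ball (0 : ℂ) r₀, ‖vEig β k m z‖ ^ 2) ≤ 9 * ξ ^ (2 * m + 2) := by
  have hsmall : ∀ z : ℂ, ‖z‖ < r₀ → 3 * (k * ‖z‖ / 2) ^ 2 ≤ m + 1 := by
    intro z hz
    have : ‖z‖ ^ 2 ≤ r₀ ^ 2 := pow_le_pow_left₀ (norm_nonneg z) hz.le 2
    nlinarith [sq_nonneg k]
  have hinner : ∀ z ∈ ball (0 : ℂ) (ξ * r₀), ‖z‖ < r₀ := by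
    intro z hz
    rw [mem_ball_zero_iff] at hz
    nlinarith [norm_nonneg z, hξ.1, hξ.2]
  have hbound := setIntegral_ball_div_le_of_homogeneous_bounds volume
    (continuous_norm_vEig_sq β k m) (by unfold vEigLeading; fun_prop) (fun z => by positivity)
    (by norm_num : (0 : ℝ) < 1 / 4) (by norm_num : (0 : ℝ) ≤ 9 / 4) hξ.1
    (vEigLeading_smul_sq β k m hξ.1.le)
    (fun z hz => (vEigLeading_sq_le_norm_vEig_sq (hsmall z (mem_ball_zero_iff.1 hz))).1)
    (fun z hz => (vEigLeading_sq_le_norm_vEig_sq (hsmall z (hinner z hz))).2)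
  rw [Complex.finrank_real_complex] at hbound
  linarith

theorem vEig_surface_localized_general (k r₀ ξ : ℝ)
    (hξ : ξ ∈ Set.Ioo (0 : ℝ) 1) (β : ℕ → ℝ) :
    (∃ C > 0, ∃ M : ℕ, ∀ m ≥ M,
      (∫ z in Metric.ball (0 : ℂ) (ξ * r₀), ‖vEig β k m z‖ ^ 2) /
          (∫ z in Metric.ball (0 : ℂ) r₀, ‖vEig β k m z‖ ^ 2) ≤
        C * ξ ^ (2 * m + 2) * (1 + 2 * m)) ∧
    Tendsto (fun m : ℕ =>
      (∫ z in Metric.ball (0 : ℂ) (ξ * r₀), ‖vEig β k m z‖ ^ 2) /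
        (∫ z in Metric.ball (0 : ℂ) r₀, ‖vEig β k m z‖ ^ 2)) atTop (nhds 0) := by
  obtain ⟨M, hM⟩ := eventually_atTop.1 <|
    (tendsto_natCast_atTop_atTop (R := ℝ)).eventually_ge_atTop (3 * (k * r₀ / 2) ^ 2)
  have hratio : ∀ m ≥ M, (∫ z in ball (0 : ℂ) (ξ * r₀), ‖vEig β k m z‖ ^ 2) /
      (∫ z in ball (0 : ℂ) r₀, ‖vEig β k m z‖ ^ 2) ≤ 9 * ξ ^ (2 * m + 2) :=
    fun m hm => vEig_mass_ratio_le β hξ (by linarith [hM m hm])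
  refine ⟨⟨9, by norm_num, M, fun m hm => (hratio m hm).trans <|
    le_mul_of_one_le_right (mul_nonneg (by norm_num) (pow_nonneg hξ.1.le _))
      (by linarith [m.cast_nonneg (α := ℝ)])⟩, ?_⟩
  have hlim : Tendsto (fun m : ℕ => 9 * ξ ^ (2 * m + 2)) atTop (nhds 0) := by
    simpa using ((tendsto_pow_atTop_nhds_zero_of_lt_one hξ.1.le hξ.2).comp
      (tendsto_atTop_mono (fun m => show m ≤ 2 * m + 2 by omega) tendsto_id)).const_mul 9
  refine squeeze_zero' (Eventually.of_forall fun m => ?_) (eventually_atTop.2 ⟨M, hratio⟩) hlim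
  exact div_nonneg (setIntegral_nonneg measurableSet_ball fun z _ => by positivity)
    (setIntegral_nonneg measurableSet_ball fun z _ => by positivity)

/-- For `v_m(r,θ) = β_m J_m(kr)e^{imθ}` on the disk `B_{r₀}`,
the mass ratio satisfies
`‖v_m‖²_{L²(B_{ξr₀})}/‖v_m‖²_{L²(B_{r₀})} ≤ C(k,r₀) ξ^{2m+2}(1+2m)` for all
large `m`, and in particular tends to `0`: the `v_m` are surface-localized. -/
theorem vEig_surface_localized (k r₀ ξ : ℝ) (hk : 0 < k) (hr₀ : 0 < r₀)
    (hξ : ξ ∈ Set.Ioo (0 : ℝ) 1) (β : ℕ → ℝ) (hβ : ∀ m, 0 < β m) :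
    (∃ C > 0, ∃ M : ℕ, ∀ m ≥ M,
      (∫ z in Metric.ball (0 : ℂ) (ξ * r₀), ‖vEig β k m z‖ ^ 2) /
          (∫ z in Metric.ball (0 : ℂ) r₀, ‖vEig β k m z‖ ^ 2) ≤
        C * ξ ^ (2 * m + 2) * (1 + 2 * m)) ∧
    Tendsto (fun m : ℕ =>
      (∫ z in Metric.ball (0 : ℂ) (ξ * r₀), ‖vEig β k m z‖ ^ 2) /
        (∫ z in Metric.ball (0 : ℂ) r₀, ‖vEig β k m z‖ ^ 2)) atTop (nhds 0) :=
  vEig_surface_localized_general k r₀ ξ hξ β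
end

section
/- Fix k > 0, r₀ = 1, and for each m let v_m(r, θ) = β_m J_m(kr) e^{imθ} on the unit disk with β_m chosen so that ∥v_m∥_{L²(B₁)} = 1. Then ∥∇v_m∥_{L∞(B₁)}/k ≥ C(k) m^{3/2} for all sufficiently large m; in particular the normalized eigenfunctions have gradient sup-norm growing at least like m^{3/2}, much faster than the wavenumber k. -/
/-!
Writing `J_m(x) = (x/2)^m R_m((x/2)^2)` with `R_m(t) = ∑ (-1)ⁿ tⁿ / (n! (n+m)!)` entire, the
eigenfunction becomes `v_m(z) = β_m (k/2)^m z^m R_m((k/2)^2 |z|^2)`: it is smooth and satisfies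
`v_m(e^{iθ} z) = e^{imθ} v_m(z)`. Differentiating along circles gives
`m |v_m(z)| ≤ |∇v_m(z)| |z|`, so at radius `r = 1 - 1/(2m)` the gradient is at least
`m |β_m| |J_m(kr)| ≳ m |β_m| (k/2)^m / m!`.
Conversely `|J_m(k|z|)| ≲ (k/2)^m |z|^m / m!` and `∫_{B₁} |z|^{2m} = π/(m+1)`, so the
normalisation forces `|β_m| (k/2)^m / m! ≳ √m`; together the gradient is `≳ m^{3/2}`.
-/

open MeasureTheory

open Metric
open scoped Nat

noncomputable def besselCoeff (m n : ℕ) : ℝ := (-1) ^ n / (n ! * (n + m)!)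

noncomputable def besselReduced (m : ℕ) (t : ℝ) : ℝ := ∑' n, besselCoeff m n * t ^ n

theorem besselJ_eq_mul_besselReduced (m : ℕ) (x : ℝ) :
    besselJ m x = (x / 2) ^ m * besselReduced m ((x / 2) ^ 2) := by
  rw [besselReduced, ← tsum_mul_left]
  exact tsum_congr fun n => by rw [besselCoeff, pow_add, pow_mul]; ring

theorem abs_besselCoeff_mul_pow (m n : ℕ) (t : ℝ) :
    |besselCoeff m n * t ^ n| = |t| ^ n / (n ! * (n + m)!) := by
  rw [besselCoeff, abs_mul, abs_div, abs_pow, abs_pow, abs_neg, abs_one, one_pow,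
    abs_of_pos (by positivity)]
  ring

theorem abs_besselCoeff_mul_pow_le (m n : ℕ) (t : ℝ) :
    |besselCoeff m n * t ^ n| ≤ |t| ^ n / n ! := by
  rw [abs_besselCoeff_mul_pow]
  exact div_le_div_of_nonneg_left (by positivity) (by positivity)
    (le_mul_of_one_le_right (by positivity) (mod_cast Nat.one_le_of_lt (Nat.factorial_pos _)))

theorem abs_besselCoeff_succ_mul_pow_le (m n : ℕ) (t : ℝ) :
    |besselCoeff m (n + 1) * t ^ (n + 1)| ≤ |t| ^ (n + 1) / (n + 1)! / (m + 1)! := by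
  rw [abs_besselCoeff_mul_pow, div_div]
  have : (m + 1)! ≤ (n + 1 + m)! := Nat.factorial_le (by omega)
  gcongr

theorem summable_besselCoeff_mul_pow (m : ℕ) (t : ℝ) :
    Summable fun n => besselCoeff m n * t ^ n :=
  .of_norm_bounded (Real.summable_pow_div_factorial |t|) (abs_besselCoeff_mul_pow_le m · t)

theorem Real.hasSum_pow_succ_div_factorial (x : ℝ) :
    HasSum (fun n => x ^ (n + 1) / (n + 1)!) (Real.exp x - 1) := by
  have h := NormedSpace.expSeries_div_hasSum_exp x
  rw [← Real.exp_eq_exp_ℝ] at h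
  simpa using (hasSum_nat_add_iff' 1).2 h

theorem abs_besselReduced_sub_le (m : ℕ) (t : ℝ) :
    |besselReduced m t - 1 / m !| ≤ (Real.exp |t| - 1) / (m + 1)! := by
  have hs := summable_besselCoeff_mul_pow m t
  have htail : Summable fun n => |besselCoeff m (n + 1) * t ^ (n + 1)| :=
    (summable_nat_add_iff 1).2 hs.abs
  have hbound : HasSum (fun n => |t| ^ (n + 1) / (n + 1)! / (m + 1)!)
      ((Real.exp |t| - 1) / (m + 1)!) :=
    (Real.hasSum_pow_succ_div_factorial |t|).div_const _
  rw [besselReduced, hs.tsum_eq_zero_add]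
  simp only [besselCoeff, pow_zero, Nat.factorial_zero, Nat.cast_one, zero_add, one_mul, mul_one,
    add_sub_cancel_left]
  calc |∑' n, besselCoeff m (n + 1) * t ^ (n + 1)|
      ≤ ∑' n, |besselCoeff m (n + 1) * t ^ (n + 1)| := by
        simp only [← Real.norm_eq_abs] at htail ⊢
        exact norm_tsum_le_tsum_norm htail
    _ ≤ (Real.exp |t| - 1) / (m + 1)! :=
        hasSum_le (fun n => abs_besselCoeff_succ_mul_pow_le m n t) htail.hasSum hbound

theorem abs_besselReduced_le (m : ℕ) (t : ℝ) : |besselReduced m t| ≤ Real.exp |t| / m ! := by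
  have hfac : (m ! : ℝ) ≤ (m + 1)! := mod_cast Nat.factorial_le (Nat.le_succ m)
  have he : 0 ≤ Real.exp |t| - 1 := by linarith [Real.add_one_le_exp |t|, abs_nonneg t]
  calc |besselReduced m t| ≤ 1 / m ! + |besselReduced m t - 1 / m !| := by
        simpa using abs_add_le (1 / m ! : ℝ) (besselReduced m t - 1 / m !)
    _ ≤ 1 / m ! + (Real.exp |t| - 1) / m ! := by
        grw [abs_besselReduced_sub_le]
        gcongr
    _ = Real.exp |t| / m ! := by ring

theorem one_div_two_mul_factorial_le_besselReduced {m : ℕ} {t : ℝ}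
    (ht : 2 * (Real.exp |t| - 1) ≤ m + 1) : 1 / (2 * m !) ≤ besselReduced m t := by
  have h := (abs_le.1 (abs_besselReduced_sub_le m t)).1
  have hfac : ((m + 1)! : ℝ) = (m + 1) * m ! := by push_cast [Nat.factorial_succ]; ring
  have : (Real.exp |t| - 1) / (m + 1)! ≤ 1 / (2 * m !) := by
    rw [hfac, div_le_div_iff₀ (by positivity) (by positivity)]
    nlinarith [Nat.factorial_pos m]
  have h2 : (1 : ℝ) / m ! = 1 / (2 * m !) + 1 / (2 * m !) := by ring
  linarith

theorem besselReduced_eq_ofScalarsSum (m : ℕ) :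
    besselReduced m = FormalMultilinearSeries.ofScalarsSum (E := ℝ) (besselCoeff m) := by
  funext t
  simp only [besselReduced, FormalMultilinearSeries.ofScalars_sum_eq, smul_eq_mul]

theorem radius_ofScalars_besselCoeff (m : ℕ) :
    (FormalMultilinearSeries.ofScalars ℝ (besselCoeff m)).radius = ⊤ := by
  refine FormalMultilinearSeries.radius_eq_top_of_summable_norm _ fun r => ?_
  simp only [FormalMultilinearSeries.ofScalars_norm, Real.norm_eq_abs]
  refine .of_norm_bounded (Real.summable_pow_div_factorial r) fun n => ?_
  simpa [abs_mul, abs_pow] using abs_besselCoeff_mul_pow_le m n r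

theorem contDiff_besselReduced (m : ℕ) {n : WithTop ℕ∞} :
    ContDiff ℝ n (besselReduced m) := by
  have h := (FormalMultilinearSeries.ofScalars ℝ (besselCoeff m)).hasFPowerSeriesOnBall
    (by simp [radius_ofScalars_besselCoeff])
  have hA := h.analyticOnNhd
  rw [radius_ofScalars_besselCoeff, Metric.eball_top] at hA
  rw [besselReduced_eq_ofScalarsSum]
  exact hA.contDiff

theorem abs_besselJ_le (m : ℕ) (x : ℝ) :
    |besselJ m x| ≤ (|x| / 2) ^ m * Real.exp ((x / 2) ^ 2) / m ! := by
  rw [besselJ_eq_mul_besselReduced, abs_mul, abs_pow, abs_div, abs_two, mul_div_assoc]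
  gcongr
  have h := abs_besselReduced_le m ((x / 2) ^ 2)
  rwa [abs_of_nonneg (sq_nonneg (x / 2))] at h

theorem pow_div_le_abs_besselJ {m : ℕ} {x : ℝ}
    (hx : 2 * (Real.exp ((x / 2) ^ 2) - 1) ≤ m + 1) :
    (|x| / 2) ^ m / (2 * m !) ≤ |besselJ m x| := by
  have hR := one_div_two_mul_factorial_le_besselReduced
    (by rwa [abs_of_nonneg (sq_nonneg (x / 2))] : 2 * (Real.exp |(x / 2) ^ 2| - 1) ≤ m + 1)
  rw [besselJ_eq_mul_besselReduced, abs_mul, abs_pow, abs_div, abs_two,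
    abs_of_pos (lt_of_lt_of_le (by positivity) hR), div_eq_mul_one_div _ (2 * _ : ℝ)]
  gcongr

theorem vEig_eq_mul_besselReduced (β : ℕ → ℝ) (k : ℝ) (m : ℕ) (z : ℂ) :
    vEig β k m z =
      β m * (k / 2) ^ m * z ^ m * (besselReduced m ((k / 2) ^ 2 * ‖z‖ ^ 2) : ℂ) := by
  have hz : z ^ m = (‖z‖ : ℂ) ^ m * Complex.exp (Complex.I * m * z.arg) := by
    conv_lhs => rw [← Complex.norm_mul_exp_arg_mul_I z]
    rw [mul_pow, ← Complex.exp_nat_mul]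
    ring_nf
  rw [vEig, besselJ_eq_mul_besselReduced, hz,
    show (k * ‖z‖ / 2) ^ 2 = (k / 2) ^ 2 * ‖z‖ ^ 2 by ring]
  push_cast
  ring

theorem contDiff_vEig (β : ℕ → ℝ) (k : ℝ) (m : ℕ) {n : WithTop ℕ∞} :
    ContDiff ℝ n (vEig β k m) := by
  have hR : ContDiff ℝ n fun z : ℂ => (besselReduced m ((k / 2) ^ 2 * ‖z‖ ^ 2) : ℂ) :=
    Complex.ofRealCLM.contDiff.comp
      ((contDiff_besselReduced m).comp (contDiff_const.mul (contDiff_norm_sq ℝ)))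
  rw [show vEig β k m = _ from funext (vEig_eq_mul_besselReduced β k m)]
  exact (contDiff_const.mul (contDiff_id.pow m)).mul hR

theorem vEig_exp_mul (β : ℕ → ℝ) (k : ℝ) (m : ℕ) (θ : ℝ) (z : ℂ) :
    vEig β k m (Complex.exp (θ * Complex.I) * z) =
      Complex.exp (θ * Complex.I) ^ m * vEig β k m z := by
  rw [vEig_eq_mul_besselReduced, vEig_eq_mul_besselReduced, norm_mul,
    Complex.norm_exp_ofReal_mul_I, one_mul]
  ring

theorem norm_vEig (β : ℕ → ℝ) (k : ℝ) (m : ℕ) (z : ℂ) :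
    ‖vEig β k m z‖ = |β m| * |besselJ m (k * ‖z‖)| := by
  simp [vEig, Complex.norm_exp]

theorem natCast_mul_norm_le_norm_fderiv_mul_norm {f : ℂ → ℂ} {m : ℕ} {z : ℂ}
    (hf : DifferentiableAt ℝ f z)
    (hrot : ∀ θ : ℝ,
      f (Complex.exp (θ * Complex.I) * z) = Complex.exp (θ * Complex.I) ^ m * f z) :
    m * ‖f z‖ ≤ ‖fderiv ℝ f z‖ * ‖z‖ := by
  have hexp : HasDerivAt (fun θ : ℝ => Complex.exp (θ * Complex.I)) Complex.I 0 := by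
    simpa using ((hasDerivAt_id (0 : ℝ)).ofReal_comp.mul_const Complex.I).cexp
  have hchain : HasDerivAt (fun θ : ℝ => f (Complex.exp (θ * Complex.I) * z))
      (fderiv ℝ f z (Complex.I * z)) 0 := by
    refine HasFDerivAt.comp_hasDerivAt (f := fun θ : ℝ => Complex.exp (θ * Complex.I) * z) 0 ?_
      (hexp.mul_const z)
    simpa using hf.hasFDerivAt
  have hrotated : HasDerivAt (fun θ : ℝ => f (Complex.exp (θ * Complex.I) * z))
      (m * Complex.I * f z) 0 := by
    simp_rw [hrot]
    simpa using (hexp.pow m).mul_const (f z)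
  calc (m : ℝ) * ‖f z‖ = ‖m * Complex.I * f z‖ := by simp
    _ = ‖fderiv ℝ f z (Complex.I * z)‖ := by rw [hchain.unique hrotated]
    _ ≤ ‖fderiv ℝ f z‖ * ‖Complex.I * z‖ := (fderiv ℝ f z).le_opNorm _
    _ = ‖fderiv ℝ f z‖ * ‖z‖ := by simp

theorem bddAbove_range_norm_fderiv_ball {E F : Type*} [NormedAddCommGroup E] [NormedSpace ℝ E]
    [ProperSpace E] [NormedAddCommGroup F] [NormedSpace ℝ F] {f : E → F} (hf : ContDiff ℝ 1 f)
    (x : E) (r : ℝ) : BddAbove (Set.range fun z : ball x r => ‖fderiv ℝ f z‖) := by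
  obtain ⟨C, hC⟩ := (isCompact_closedBall x r).bddAbove_image
    (hf.continuous_fderiv one_ne_zero).norm.continuousOn
  exact ⟨C, by rintro _ ⟨z, rfl⟩; exact hC ⟨z, ball_subset_closedBall z.2, rfl⟩⟩

theorem integral_ball_norm_pow {E : Type*} [NormedAddCommGroup E] [NormedSpace ℝ E]
    [FiniteDimensional ℝ E] [Nontrivial E] [MeasurableSpace E] [BorelSpace E]
    (μ : Measure E) [μ.IsAddHaarMeasure] (p : ℕ) :
    ∫ x in ball (0 : E) 1, ‖x‖ ^ p ∂μ =
      Module.finrank ℝ E * μ.real (ball 0 1) / (p + Module.finrank ℝ E) := by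
  obtain ⟨d, hd⟩ :=
    Nat.exists_eq_add_one_of_ne_zero (Module.finrank_pos (R := ℝ) (M := E)).ne'
  have hradial : (ball (0 : E) 1).indicator (fun x => ‖x‖ ^ p) =
      fun x => (Set.Iio 1).indicator (· ^ p) ‖x‖ := by
    ext x
    by_cases h : ‖x‖ < 1 <;> simp [Set.indicator, h]
  have hprofile : (fun y : ℝ => y ^ d • (Set.Iio 1).indicator (· ^ p) y) =
      (Set.Iio 1).indicator (· ^ (d + p)) := by
    ext y
    by_cases h : y < 1 <;> simp [Set.indicator, h, pow_add]
  rw [← integral_indicator measurableSet_ball, hradial, integral_fun_norm_addHaar μ, hd,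
    Nat.add_sub_cancel, hprofile, setIntegral_indicator measurableSet_Iio, Set.Ioi_inter_Iio,
    ← integral_Ioc_eq_integral_Ioo, ← intervalIntegral.integral_of_le zero_le_one, integral_pow]
  simp only [nsmul_eq_mul, smul_eq_mul, one_pow, ne_eq, Nat.add_eq_zero_iff, one_ne_zero,
    and_false, not_false_eq_true, zero_pow, sub_zero]
  push_cast
  field_simp
  ring

theorem Complex.integral_ball_norm_pow (p : ℕ) :
    ∫ z in ball (0 : ℂ) 1, ‖z‖ ^ p = 2 * Real.pi / (p + 2) := by
  rw [_root_.integral_ball_norm_pow, Complex.finrank_real_complex, measureReal_def,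
    Complex.volume_ball]
  simp

theorem natCast_add_one_le_pi_mul_sq {β : ℕ → ℝ} {k : ℝ} {m : ℕ}
    (hnorm : ∫ z in ball (0 : ℂ) 1, ‖vEig β k m z‖ ^ 2 = 1) :
    (m + 1 : ℝ) ≤ Real.pi * (β m * ((|k| / 2) ^ m / m !) * Real.exp ((k / 2) ^ 2)) ^ 2 := by
  set B := β m * ((|k| / 2) ^ m / m !) * Real.exp ((k / 2) ^ 2)
  have hpoint : ∀ z ∈ ball (0 : ℂ) 1,
      ‖vEig β k m z‖ ^ 2 ≤ B ^ 2 * ‖z‖ ^ (2 * m) := by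
    intro z hz
    have hz1 : ‖z‖ ≤ 1 := (mem_ball_zero_iff.1 hz).le
    have hexp : Real.exp ((k * ‖z‖ / 2) ^ 2) ≤ Real.exp ((k / 2) ^ 2) := by
      rw [show (k * ‖z‖ / 2) ^ 2 = (k / 2) ^ 2 * ‖z‖ ^ 2 by ring]
      gcongr
      exact mul_le_of_le_one_right (sq_nonneg _) (pow_le_one₀ (norm_nonneg z) hz1)
    have hv : ‖vEig β k m z‖ ≤ |B| * ‖z‖ ^ m := by
      calc ‖vEig β k m z‖
          ≤ |β m| * ((|k * ‖z‖| / 2) ^ m * Real.exp ((k * ‖z‖ / 2) ^ 2) / m !) := by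
            rw [norm_vEig]; gcongr; exact abs_besselJ_le m _
        _ ≤ |β m| * ((|k| * ‖z‖ / 2) ^ m * Real.exp ((k / 2) ^ 2) / m !) := by
            rw [abs_mul, abs_norm]; gcongr
        _ = |B| * ‖z‖ ^ m := by
            rw [abs_mul, abs_mul, abs_of_nonneg (by positivity : (0 : ℝ) ≤ (|k| / 2) ^ m / m !),
              abs_of_pos (Real.exp_pos _)]
            ring
    rw [← sq_abs B, pow_mul', ← mul_pow]
    exact pow_le_pow_left₀ (norm_nonneg _) hv 2
  have hint {f : ℂ → ℝ} (hf : Continuous f) : IntegrableOn f (ball (0 : ℂ) 1) :=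
    (hf.continuousOn.integrableOn_compact (isCompact_closedBall 0 1)).mono_set
      ball_subset_closedBall
  have hle : 1 ≤ B ^ 2 * (Real.pi / (m + 1)) := by
    calc (1 : ℝ) = ∫ z in ball (0 : ℂ) 1, ‖vEig β k m z‖ ^ 2 := hnorm.symm
      _ ≤ ∫ z in ball (0 : ℂ) 1, B ^ 2 * ‖z‖ ^ (2 * m) :=
          setIntegral_mono_on (hint ((contDiff_vEig β k m (n := 0)).continuous.norm.pow 2))
            (hint ((continuous_norm.pow _).const_mul _)) measurableSet_ball hpoint
      _ = B ^ 2 * (Real.pi / (m + 1)) := by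
          rw [integral_const_mul, Complex.integral_ball_norm_pow]
          field_simp
          push_cast
          ring
  rw [← mul_div_assoc, le_div_iff₀ (by positivity)] at hle
  linarith

theorem le_iSup_norm_fderiv_vEig (β : ℕ → ℝ) {k : ℝ} {m : ℕ} (hm : 1 ≤ m)
    (hk : 2 * (Real.exp ((k / 2) ^ 2) - 1) ≤ m + 1) :
    m * |β m| * ((|k| / 2) ^ m / m !) / 4 ≤
      ⨆ z : ball (0 : ℂ) 1, ‖fderiv ℝ (vEig β k m) (z : ℂ)‖ := by
  have hm1 : (1 : ℝ) ≤ m := by exact_mod_cast hm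
  have hstep : 1 / (2 * m : ℝ) ≤ 1 / 2 := by gcongr; linarith
  -- Bernoulli's inequality makes `r ^ m ≥ 1 / 2` for this radius.
  set r : ℝ := 1 - 1 / (2 * m)
  have hr0 : 0 < r := by linarith
  have hr_lt : r < 1 := sub_lt_self 1 (by positivity)
  have hrm : 1 / 2 ≤ r ^ m := by
    have h := one_add_mul_le_pow (a := -(1 / (2 * m : ℝ))) (by linarith) m
    have hhalf : (m : ℝ) * (1 / (2 * m)) = 1 / 2 := by field_simp
    rw [← sub_eq_add_neg] at h
    linarith
  have hnorm_r : ‖(r : ℂ)‖ = r := by rw [Complex.norm_real, Real.norm_of_nonneg hr0.le]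
  have hJ : (|k| / 2) ^ m / (4 * m !) ≤ |besselJ m (k * r)| := by
    refine le_trans ?_ (pow_div_le_abs_besselJ (le_trans ?_ hk))
    · calc (|k| / 2) ^ m / (4 * m !) = (|k| / 2) ^ m * (1 / 2) / (2 * m !) := by ring
        _ ≤ (|k| / 2) ^ m * r ^ m / (2 * m !) := by gcongr
        _ = (|k * r| / 2) ^ m / (2 * m !) := by
          rw [abs_mul, abs_of_pos hr0, mul_div_right_comm |k|, mul_pow]
    · rw [show (k * r / 2) ^ 2 = (k / 2) ^ 2 * r ^ 2 by ring]
      gcongr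
      exact mul_le_of_le_one_right (sq_nonneg _) (pow_le_one₀ hr0.le hr_lt.le)
  have hgrad := natCast_mul_norm_le_norm_fderiv_mul_norm
    ((contDiff_vEig β k m (n := 1)).differentiable one_ne_zero (r : ℂ))
    (vEig_exp_mul β k m · r)
  rw [norm_vEig, hnorm_r] at hgrad
  calc m * |β m| * ((|k| / 2) ^ m / m !) / 4 = m * (|β m| * ((|k| / 2) ^ m / (4 * m !))) := by
        ring
    _ ≤ m * (|β m| * |besselJ m (k * r)|) := by gcongr
    _ ≤ ‖fderiv ℝ (vEig β k m) (r : ℂ)‖ * r := hgrad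
    _ ≤ ‖fderiv ℝ (vEig β k m) (r : ℂ)‖ :=
        mul_le_of_le_one_right (norm_nonneg _) hr_lt.le
    _ ≤ ⨆ z : ball (0 : ℂ) 1, ‖fderiv ℝ (vEig β k m) (z : ℂ)‖ :=
        le_ciSup (bddAbove_range_norm_fderiv_ball (contDiff_vEig β k m) 0 1)
          ⟨(r : ℂ), by rw [mem_ball_zero_iff, hnorm_r]; exact hr_lt⟩

theorem gradient_sup_norm_blowup_general (k : ℝ) (hk : 0 < k) (β : ℕ → ℝ)
    (hnorm : ∀ m, (∫ z in Metric.ball (0 : ℂ) 1, ‖vEig β k m z‖ ^ 2) = 1) :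
    ∃ C > 0, ∃ M : ℕ, ∀ m ≥ M,
      C * (m : ℝ) ^ ((3 : ℝ) / 2) ≤
        (⨆ z : Metric.ball (0 : ℂ) 1, ‖fderiv ℝ (vEig β k m) (z : ℂ)‖) / k := by
  set E := Real.exp ((k / 2) ^ 2)
  refine ⟨1 / (4 * √Real.pi * E * k), by positivity, ⌈2 * E⌉₊, fun m hm => ?_⟩
  have hmE : 2 * E ≤ m := Nat.ceil_le.1 hm
  have hE : 1 ≤ E := Real.one_le_exp (sq_nonneg _)
  have hm1 : 1 ≤ m := by exact_mod_cast (by linarith : (1 : ℝ) ≤ m)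
  set A := (|k| / 2) ^ m / (m ! : ℝ)
  have hgrad := le_iSup_norm_fderiv_vEig β hm1 (by linarith : 2 * (E - 1) ≤ m + 1)
  have hsqrt : √m ≤ √Real.pi * (|β m| * A * E) := by
    calc √m ≤ √(m + 1) := Real.sqrt_le_sqrt (by linarith)
      _ ≤ √(Real.pi * (β m * A * E) ^ 2) :=
          Real.sqrt_le_sqrt (natCast_add_one_le_pi_mul_sq (hnorm m))
      _ = √Real.pi * (|β m| * A * E) := by
          rw [Real.sqrt_mul Real.pi_pos.le, Real.sqrt_sq_eq_abs, abs_mul, abs_mul,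
            abs_of_nonneg (by positivity : 0 ≤ A), abs_of_pos (Real.exp_pos _)]
  have h32 : (m : ℝ) ^ ((3 : ℝ) / 2) = m * √m := by
    rw [show (3 : ℝ) / 2 = 1 + 1 / 2 by norm_num, Real.rpow_add (by positivity), Real.rpow_one,
      ← Real.sqrt_eq_rpow]
  rw [h32, le_div_iff₀ hk]
  calc 1 / (4 * √Real.pi * E * k) * (m * √m) * k = m * √m / (4 * √Real.pi * E) := by
        field_simp
    _ ≤ m * (√Real.pi * (|β m| * A * E)) / (4 * √Real.pi * E) := by gcongr
    _ = m * |β m| * A / 4 := by field_simp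
    _ ≤ _ := hgrad

/-- Fix `k > 0`, `r₀ = 1`, and let `v_m = β_m J_m(kr)e^{imθ}`
be `L²(B₁)`-normalized. Then `‖∇v_m‖_{L^∞(B₁)}/k ≥ C(k) m^{3/2}` for all
sufficiently large `m`. -/
theorem gradient_sup_norm_blowup (k : ℝ) (hk : 0 < k) (β : ℕ → ℝ)
    (hβpos : ∀ m, 0 < β m)
    (hnorm : ∀ m, (∫ z in Metric.ball (0 : ℂ) 1, ‖vEig β k m z‖ ^ 2) = 1) :
    ∃ C > 0, ∃ M : ℕ, ∀ m ≥ M,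
      C * (m : ℝ) ^ ((3 : ℝ) / 2) ≤
        (⨆ z : Metric.ball (0 : ℂ) 1, ‖fderiv ℝ (vEig β k m) (z : ℂ)‖) / k :=
  gradient_sup_norm_blowup_general k hk β hnorm
end
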